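/- arXiv:2310.11328 — 2 statements merged into one kernel-verified Lean document; each statement's English description precedes it below -/
import Mathlib

section
/- Let (M, ζ, η, Φ, g) be a contact metric structure, i.e. additionally dη(X, Y) = g(X, ΦY), and let (ζ*, η*, Φ*, g*) be its (H, F)-deformation with Φ* = ±Φ. Then dη*(X, Y) = ±(H/F²) g*(X, Φ*Y) for all X, Y; in particular the deformed structure is a contact metric structure (with a = ±1) if and only if H = F². -/
/-!
STATEMENT 9: Let (M, ζ, η, Φ, g) be a contact metric structure (dη(X,Y) = g(X,ΦY))
and (ζ*, η*, Φ*, g*) its (H,F)-deformation with Φ* = εΦ (ε = ±1), η* = Hη,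
g* = F²g + (H²-F²)η⊗η.  Then dη*(X,Y) = ε(H/F²) g*(X, Φ*Y) for all X, Y; in
particular the deformed structure is a contact metric structure (a = ε = ±1)
iff H = F².

Convention: 2 dα(X,Y) = (∇_X α)(Y) - (∇_Y α)(X), with
(∇_X α)(Y) = X(α(Y)) - α(∇_X Y), so
dα(X,Y) = (1/2)((X(α Y) - α(∇_X Y)) - (Y(α X) - α(∇_Y X))).
-/
theorem stmt_9 {C : Type*} [CommRing C] [Algebra ℝ C] [NoZeroSMulDivisors ℝ C]
    {X : Type*} [AddCommGroup X] [Module C X] [Module ℝ X] [IsScalarTower ℝ C X]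
    (g : X →ₗ[C] X →ₗ[C] C) (ζ : X) (η : X →ₗ[C] C) (Φ : X →ₗ[C] X)
    (D : X → X → X) (act : X → C → C)
    (H F ε : ℝ) (hH : 0 < H) (hF : 0 < F) (hε : ε = 1 ∨ ε = -1)
    -- almost contact metric structure axioms
    (hη : η ζ = 1)
    (hΦ2 : ∀ v : X, Φ (Φ v) = -v + η v • ζ)
    (hc : ∀ v w : X, g (Φ v) (Φ w) = g v w - η v * η w)
    -- contact metric structure: dη(X,Y) = g(X, ΦY)
    (hcontact : ∀ a b : X,
      (2⁻¹ : ℝ) • ((act a (η b) - η (D a b)) - (act b (η a) - η (D b a)))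
        = g a (Φ b))
    -- directional derivatives are ℝ-linear
    (hactsmul : ∀ u : X, ∀ (r : ℝ) (a : C), act u (r • a) = r • act u a)
    -- nontriviality: g(·, Φ·) is not identically zero
    (hnz : ∃ a b : X, g a (Φ b) ≠ 0) :
    -- dη*(X,Y) = ε (H/F²) g*(X, Φ*Y)
    ((∀ a b : X,
      (2⁻¹ : ℝ) • ((act a (H • η b) - H • η (D a b))
          - (act b (H • η a) - H • η (D b a)))
        = (ε * (H / F ^ 2)) •
            (F ^ 2 • g a (ε • Φ b) + (H ^ 2 - F ^ 2) • (η a * η (ε • Φ b))))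
    -- the deformation is a contact metric structure (dη* = ε g*(·,Φ*·)) iff H = F²
    ∧ ((∀ a b : X,
        (2⁻¹ : ℝ) • ((act a (H • η b) - H • η (D a b))
            - (act b (H • η a) - H • η (D b a)))
          = ε • (F ^ 2 • g a (ε • Φ b) + (H ^ 2 - F ^ 2) • (η a * η (ε • Φ b))))
        ↔ H = F ^ 2)) := by
  obtain ⟨a0, b0, hnz0⟩ := hnz
  have hε2 : ε * ε = 1 := by rcases hε with h | h <;> rw [h] <;> norm_num
  have hF2 : F ^ 2 ≠ 0 := pow_ne_zero _ hF.ne'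
  -- self-pairing vanishes
  have hself : ∀ a : X, g a (Φ a) = 0 := by
    intro a
    have h := hcontact a a
    simpa using h.symm
  -- Φ² ζ = 0
  have hΦζζ : Φ (Φ ζ) = 0 := by
    rw [hΦ2, hη, one_smul, neg_add_cancel]
  -- η(Φ v) • ζ = η v • Φ ζ
  have hA : ∀ v : X, η (Φ v) • ζ = η v • Φ ζ := by
    intro v
    have h1 := hΦ2 (Φ v)
    have h2 : Φ (Φ (Φ v)) = -Φ v + η v • Φ ζ := by
      rw [hΦ2 v, map_add, map_neg, map_smul]
    exact add_left_cancel (h1.symm.trans h2)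
  have hζ : Φ ζ = η (Φ ζ) • ζ := by
    have h := hA ζ
    rw [hη, one_smul] at h
    exact h.symm
  have ht2 : η (Φ ζ) * η (Φ ζ) = 0 := by
    have h : ((η (Φ ζ) * η (Φ ζ)) • ζ : X) = 0 := by
      rw [← smul_smul, ← hζ, ← map_smul Φ, ← hζ, hΦζζ]
    have h2 := congrArg η h
    simpa [map_smul, smul_eq_mul, hη] using h2
  have hgζζ : g ζ ζ = 1 := by
    have h := hc ζ ζ
    rw [hζ] at h
    simp only [map_smul, LinearMap.smul_apply, smul_eq_mul, hη, mul_one] at h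
    rw [← mul_assoc, ht2, zero_mul] at h
    linear_combination -h
  have ht : η (Φ ζ) = 0 := by
    have h := hself ζ
    rw [hζ, map_smul, hgζζ, smul_eq_mul, mul_one] at h
    exact h
  have hΦζ : Φ ζ = 0 := by rw [hζ, ht, zero_smul]
  have hηΦ : ∀ v : X, η (Φ v) = 0 := by
    intro v
    have h := hA v
    rw [hΦζ, smul_zero] at h
    have h2 := congrArg η h
    simpa [map_smul, smul_eq_mul, hη] using h2
  -- the deformed LHS equals H • g a (Φ b)
  have key : ∀ a b : X,
      (2⁻¹ : ℝ) • ((act a (H • η b) - H • η (D a b))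
          - (act b (H • η a) - H • η (D b a))) = H • g a (Φ b) := by
    intro a b
    rw [← hcontact a b]
    simp only [hactsmul]
    rw [← smul_sub, ← smul_sub, ← smul_sub, smul_comm]
  refine ⟨?_, ?_, ?_⟩
  · intro a b
    rw [key a b]
    simp only [LinearMap.map_smul_of_tower, hηΦ, smul_zero, mul_zero, add_zero]
    rw [smul_smul, smul_smul]
    congr 1
    rcases hε with h | h <;> rw [h] <;> field_simp
  · intro hyp
    have h := hyp a0 b0
    rw [key a0 b0] at h
    simp only [LinearMap.map_smul_of_tower, hηΦ, smul_zero, mul_zero, add_zero] at h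
    rw [smul_smul, smul_smul] at h
    have hco : ε * F ^ 2 * ε = F ^ 2 := by linear_combination F ^ 2 * hε2
    rw [hco] at h
    have h0 : (H - F ^ 2) • g a0 (Φ b0) = 0 := by rw [sub_smul, h, sub_self]
    rcases smul_eq_zero.mp h0 with h1 | h1
    · exact sub_eq_zero.mp h1
    · exact absurd h1 hnz0
  · intro hHF a b
    rw [key a b]
    simp only [LinearMap.map_smul_of_tower, hηΦ, smul_zero, mul_zero, add_zero]
    rw [smul_smul, smul_smul, hHF]
    congr 1
    rcases hε with h | h <;> rw [h] <;> ring
end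

section
/- Let (M, ζ, η, Φ, g) be an almost contact metric structure satisfying (∇_X Φ)(Y) = b·g(X,Y)ζ - b·η(Y)X for a real constant b and all vector fields X, Y. Then ζ is a Killing vector field: L_ζ g = 0. -/
/-!
STATEMENT 11: Let (M, ζ, η, Φ, g) be an almost contact metric structure with
(∇_X Φ)(Y) = b g(X,Y) ζ - b η(Y) X for a real constant b and all X, Y.
Then ζ is a Killing vector field: L_ζ g = 0, i.e.
ζ(g(X,Y)) - g([ζ,X],Y) - g(X,[ζ,Y]) = 0 for all X, Y.
-/
theorem stmt_11 {C : Type*} [CommRing C] [Algebra ℝ C]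
    {X : Type*} [AddCommGroup X] [Module C X] [Module ℝ X] [IsScalarTower ℝ C X]
    (g : X →ₗ[C] X →ₗ[C] C) (ζ : X) (η : X →ₗ[C] C) (Φ : X →ₗ[C] X)
    (D : X → X → X) (lie : X → X → X) (act : X → C → C) (b : ℝ)
    -- almost contact metric structure axioms
    (hη : η ζ = 1)
    (hΦ2 : ∀ v : X, Φ (Φ v) = -v + η v • ζ)
    (hc : ∀ v w : X, g (Φ v) (Φ w) = g v w - η v * η w)
    -- η is the g-dual of ζ; g is symmetric
    (hdual : ∀ v : X, η v = g v ζ)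
    (hgsymm : ∀ v w : X, g v w = g w v)
    -- Levi-Civita connection: additive, metric, torsion-free
    (hDadd : ∀ u v w : X, D u (v + w) = D u v + D u w)
    (hmetric : ∀ u v w : X, act u (g v w) = g (D u v) w + g v (D u w))
    (htf : ∀ v w : X, lie v w = D v w - D w v)
    -- derivations kill constants
    (hact1 : ∀ u : X, act u (1 : C) = 0)
    -- Φ is nondegenerate on the subbundle orthogonal to ζ
    (hΦnd : ∀ v : X, Φ v = 0 → ∃ c : C, v = c • ζ)
    -- the hypothesis (∇_X Φ)(Y) = b g(X,Y) ζ - b η(Y) X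
    (hb : ∀ v w : X,
      D v (Φ w) - Φ (D v w) = (b • g v w) • ζ - (b • η w) • v) :
    -- ζ is Killing: L_ζ g = 0
    ∀ v w : X, act ζ (g v w) - g (lie ζ v) w - g v (lie ζ w) = 0 := by
  -- Notation: β = image of b in C
  set β : C := algebraMap ℝ C b with hβ
  have hsmulC : ∀ x : C, b • x = β * x := fun x => Algebra.smul_def b x
  -- rewrite hb with C-scalars
  have hb' : ∀ u z : X, D u (Φ z) - Φ (D u z) = (β * g u z) • ζ - (β * η z) • u := by
    intro u z
    rw [← hsmulC, ← hsmulC]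
    exact hb u z
  -- 2 is invertible since C is an ℝ-algebra
  have h2 : ∀ a : C, a + a = 0 → a = 0 := by
    intro a h
    have e : a = (1/2 : ℝ) • (a + a) := by
      rw [smul_add, ← add_smul]; norm_num
    rw [h, smul_zero] at e
    exact e
  -- basic dual facts
  have hηg : ∀ u : X, g u ζ = η u := fun u => (hdual u).symm
  have hgζ : ∀ u : X, g ζ u = η u := fun u => (hgsymm ζ u).trans (hηg u)
  -- η (D u ζ) = 0
  have hP0 : ∀ u : X, g (D u ζ) ζ = 0 := by
    intro u
    have e1 : g ζ ζ = (1 : C) := by rw [← hdual, hη]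
    have h1 := hmetric u ζ ζ
    rw [e1, hact1 u] at h1
    apply h2
    linear_combination -h1 - hgsymm ζ (D u ζ)
  -- key identity from Φ³
  have k1 : ∀ u : X, η (Φ u) • ζ = η u • Φ ζ := by
    intro u
    have a1 := hΦ2 (Φ u)
    have b1 := congrArg Φ (hΦ2 u)
    rw [map_add, map_neg, map_smul] at b1
    rw [a1] at b1
    exact add_left_cancel b1
  set c : C := η (Φ ζ) with hcdef
  have hηΦ : ∀ u : X, η (Φ u) = c * η u := by
    intro u
    have e := congrArg η (k1 u)
    rw [map_smul, map_smul, hη, smul_eq_mul, smul_eq_mul, mul_one] at e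
    rw [e, mul_comm]
  have hΦζ : Φ ζ = c • ζ := by
    have e := k1 ζ
    rw [hη, one_smul] at e
    exact e.symm
  -- η (D u (Φ z)) computed via hb
  have hηD : ∀ u z : X, η (D u (Φ z)) = c * η (D u z) + β * g u z - β * η z * η u := by
    intro u z
    have e := congrArg η (hb' u z)
    simp only [map_sub, map_smul, smul_eq_mul, hη, mul_one] at e
    rw [hηΦ (D u z)] at e
    linear_combination e
  -- "skew-symmetry" of Φ (up to c-terms)
  have hsk : ∀ u z : X, g (Φ u) z + g u (Φ z) = c * η u * η z + c * η u * η z := by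
    intro u z
    have h1 := hc (Φ u) z
    rw [hΦ2 u] at h1
    simp only [map_add, map_neg, map_smul, LinearMap.add_apply, LinearMap.neg_apply,
      LinearMap.smul_apply, smul_eq_mul] at h1
    rw [hgζ (Φ z), hηΦ z, hηΦ u] at h1
    linear_combination -h1
  -- Φ(D u ζ) from hb at (u, ζ)
  have hbζ : ∀ u z : X,
      g (Φ (D u ζ)) z = g (D u (Φ ζ)) z - (β * η u) * η z + β * g u z := by
    intro u z
    have e := congrArg (fun t => g t z) (hb' u ζ)
    simp only [map_sub, map_smul, LinearMap.sub_apply, LinearMap.smul_apply,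
      smul_eq_mul] at e
    rw [hηg u, hη, mul_one, hgζ z] at e
    linear_combination -e
  -- The crucial consequence of well-definedness of act: g z (D u (Φ ζ)) = 0
  have hQ : ∀ u z : X, g z (D u (Φ ζ)) = 0 := by
    intro u z
    have key : g (Φ z) ζ = g z (Φ ζ) := by
      rw [hηg (Φ z), hηΦ z, hΦζ, map_smul, smul_eq_mul, hηg z]
    have h1 := hmetric u (Φ z) ζ
    have h2' := hmetric u z (Φ ζ)
    rw [key] at h1
    -- h1 : act u (g z (Φ ζ)) = g (D u (Φ z)) ζ + g (Φ z) (D u ζ)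
    have hT1 : g (D u (Φ z)) ζ = c * η (D u z) + β * g u z - β * η z * η u := by
      rw [hηg (D u (Φ z))]; exact hηD u z
    have hT2 : g (Φ z) (D u ζ) =
        -(g z (D u (Φ ζ)) - (β * η u) * η z + β * g z u)
          + c * η z * η (D u ζ) + c * η z * η (D u ζ) := by
      have e1 := hsk z (D u ζ)
      have e2 := hbζ u z
      linear_combination e1 - e2 + hgsymm (Φ (D u ζ)) z - hgsymm (D u (Φ ζ)) z -
        β * hgsymm u z
    have hT3 : g (D u z) (Φ ζ) = c * η (D u z) := by
      rw [hΦζ, map_smul, smul_eq_mul, hηg (D u z)]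
    have hη0 : η (D u ζ) = 0 := by rw [hdual]; exact hP0 u
    apply h2
    linear_combination h1 - h2' + hT1 + hT2 - hT3 + β * hgsymm u z +
      2 * c * η z * hη0
  -- formula for g (D u ζ) z
  have hPform : ∀ u z : X, g (D u ζ) z = β * g u (Φ z) - β * η u * (c * η z) := by
    intro u z
    have h1 := hc (D u ζ) z
    have hη0 : η (D u ζ) = 0 := by rw [hdual]; exact hP0 u
    rw [hη0, zero_mul, sub_zero] at h1
    -- h1 : g (Φ (D u ζ)) (Φ z) = g (D u ζ) z
    have e2 := hbζ u (Φ z)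
    have e3 : g (D u (Φ ζ)) (Φ z) = 0 := by
      rw [hgsymm]; exact hQ u (Φ z)
    rw [e2, e3, hηΦ z] at h1
    linear_combination -h1
  -- final computation
  intro v w
  rw [htf ζ v, htf ζ w, hmetric ζ v w]
  simp only [map_sub, LinearMap.sub_apply]
  have e1 := hPform v w
  have e2 := hPform w v
  have e3 := hsk v w
  have e4 := hgsymm (Φ v) w
  have e5 := hgsymm (D w ζ) v
  linear_combination e1 + e2 + β * e3 - β * e4 - e5
end
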